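/- arXiv:2303.06805 — 3 statements merged into one kernel-verified Lean document; each statement's English description precedes it below -/
import Mathlib

section
/- For the monic matrix-valued orthogonal polynomials P(·,n) with respect to the Laguerre-type weight W^{(ν)} (the case φ(x) = x), the following difference–differential relations hold for all x > 0: for every n ≥ 0, x ∂_x P(x,n) + x P(x,n)(A−1) = (A−1) P(x,n+1) − (n+1+ν) P(x,n) − H(n) J H(n)^{−1} P(x,n); and for every n ≥ 1, −x ∂_x P(x,n) − P(x,n)(1+ν+J) = −(n+ν+J+1) P(x,n) + H(n)(A−1)^* H(n−1)^{−1} P(x,n−1), while for n = 0, −x ∂_x P(x,0) − P(x,0)(1+ν+J) = −(ν+J+1) P(x,0). -/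
open MeasureTheory Matrix Polynomial Filter
open scoped ComplexOrder

attribute [local instance] Matrix.normedAddCommGroup Matrix.normedSpace

noncomputable section

abbrev MatC (N : ℕ) := Matrix (Fin N) (Fin N) ℂ
abbrev MatPoly (N : ℕ) := Matrix (Fin N) (Fin N) (Polynomial ℂ)

/-- `J = Σ_{k=1}^N k E_{k,k}`. -/
def Jmat (N : ℕ) : MatC N := Matrix.diagonal fun k => ((k : ℕ) + 1 : ℂ)

/-- `A = Σ_{k=1}^{N-1} a_k E_{k+1,k}`. -/
def Amat (N : ℕ) (a : ℕ → ℝ) : MatC N :=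
  Matrix.of fun i j => if (i : ℕ) = (j : ℕ) + 1 then ((a ((j : ℕ) + 1) : ℝ) : ℂ) else 0

/-- evaluation of a matrix polynomial at a real point -/
def pEval {N : ℕ} (P : MatPoly N) (x : ℝ) : MatC N := P.map fun q => q.eval (x : ℂ)

/-- entrywise derivative of a matrix polynomial -/
def pDeriv {N : ℕ} (P : MatPoly N) : MatPoly N := P.map fun q => Polynomial.derivative q

/-- the coefficient of `x^k` in a matrix polynomial -/
def pCoeff {N : ℕ} (P : MatPoly N) (k : ℕ) : MatC N := Matrix.of fun i j => (P i j).coeff k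

/-- `T^{(ν)}(x) = e^{-x} Σ_{k=1}^N δ_k x^{ν+k} E_{k,k}`. -/
def Tmat (N : ℕ) (ν : ℝ) (δ : ℕ → ℝ) (x : ℝ) : MatC N :=
  Matrix.diagonal fun k =>
    ((Real.exp (-x) * δ ((k : ℕ) + 1) * x ^ (ν + ((k : ℕ) : ℝ) + 1) : ℝ) : ℂ)

/-- `W^{(ν)}(x) = e^{xA} T^{(ν)}(x) e^{xA^*}`. -/
def Wmat (N : ℕ) (a : ℕ → ℝ) (ν : ℝ) (δ : ℕ → ℝ) (x : ℝ) : MatC N :=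
  NormedSpace.exp ((x : ℂ) • Amat N a) * Tmat N ν δ x *
    NormedSpace.exp ((x : ℂ) • (Amat N a)ᴴ)

/-!
Since `A` is nilpotent, `e^{xA}` is a matrix polynomial `B` with `B' = A B`, and `[J, A] = A` gives
`J B = B J + x A B`. Writing `W = B T B^*`, every entry of `Q W R^*` is a finite sum of terms
`e^{-x} x^s p(x)` with `s > -1`, and the derivative of `x Q W R^*` is
`(D Q) W R^* + Q W (D^† R)^*` for `D Q = x Q' + x Q (A - 1)` and `D^† R = x R' + R (1 + ν + J)`.
Integrating over `(0, ∞)` gives `⟨D Q, R⟩ = -⟨Q, D^† R⟩`. Now `D` raises the degree by one with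
leading coefficient `A - 1`, and `D^†` keeps the degree `n` with leading coefficient
`n + 1 + ν + J`; so by orthogonality `D P(n)` and `D^† P(n+1)` only have components along `P(n+1)`
and `P(n)`, and these are read off from the leading coefficients.
-/

namespace MatrixLaguerre

variable {N : ℕ} {a : ℕ → ℝ} {ν : ℝ} {δ : ℕ → ℝ} {P : ℕ → MatPoly N} {H : ℕ → MatC N}

def expRpowPoly (s : ℝ) (p : ℂ[X]) (x : ℝ) : ℂ :=
  ((Real.exp (-x) * x ^ s : ℝ) : ℂ) * p.eval (x : ℂ)

lemma expRpowPoly_add (s : ℝ) (p q : ℂ[X]) (x : ℝ) :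
    expRpowPoly s (p + q) x = expRpowPoly s p x + expRpowPoly s q x := by
  simp [expRpowPoly, mul_add]

lemma expRpowPoly_monomial {s x : ℝ} (hx : 0 < x) (n : ℕ) (c : ℂ) :
    expRpowPoly s (monomial n c) x = c * ((Real.exp (-x) * x ^ (s + n) : ℝ) : ℂ) := by
  rw [expRpowPoly, eval_monomial, Real.rpow_add hx, Real.rpow_natCast]
  push_cast
  ring

lemma integrableOn_expRpowPoly {s : ℝ} (hs : -1 < s) (p : ℂ[X]) :
    IntegrableOn (expRpowPoly s p) (Set.Ioi 0) := by
  induction p using Polynomial.induction_on' with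
  | add p q hp hq =>
    exact (hp.add hq).congr_fun (fun x _ => (expRpowPoly_add s p q x).symm) measurableSet_Ioi
  | monomial n c =>
    have hGamma : IntegrableOn (fun x : ℝ => Real.exp (-x) * x ^ (s + n)) (Set.Ioi 0) := by
      simpa using
        Real.GammaIntegral_convergent (s := s + n + 1) (by linarith [n.cast_nonneg (α := ℝ)])
    exact IntegrableOn.congr_fun (hGamma.ofReal.const_mul c)
      (fun x hx => (expRpowPoly_monomial hx n c).symm) measurableSet_Ioi

lemma tendsto_expRpowPoly_atTop (s : ℝ) (p : ℂ[X]) :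
    Tendsto (expRpowPoly s p) atTop (nhds 0) := by
  induction p using Polynomial.induction_on' with
  | add p q hp hq =>
    simpa only [add_zero, ← expRpowPoly_add] using hp.add hq
  | monomial n c =>
    have h : Tendsto (fun x : ℝ => x ^ (s + n) * Real.exp (-1 * x)) atTop (nhds 0) :=
      tendsto_rpow_mul_exp_neg_mul_atTop_nhds_zero (s + n) 1 one_pos
    have h' := ((Complex.continuous_ofReal.tendsto 0).comp h).const_mul c
    rw [Complex.ofReal_zero, mul_zero] at h'
    refine h'.congr' ?_
    filter_upwards [eventually_gt_atTop 0] with x hx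
    simp [expRpowPoly_monomial hx, mul_comm (x ^ (s + n))]

lemma continuousWithinAt_expRpowPoly {s : ℝ} (hs : 0 < s) (p : ℂ[X]) :
    ContinuousWithinAt (expRpowPoly s p) (Set.Ici 0) 0 := by
  refine ContinuousAt.continuousWithinAt (ContinuousAt.mul ?_ ?_)
  · exact Complex.continuous_ofReal.continuousAt.comp
      ((Real.continuous_exp.comp continuous_neg).continuousAt.mul
        (Real.continuousAt_rpow_const 0 s (Or.inr hs.le)))
  · exact p.continuous_aeval.continuousAt.comp Complex.continuous_ofReal.continuousAt

lemma hasDerivAt_expRpowPoly (s : ℝ) (p : ℂ[X]) {x : ℝ} (hx : 0 < x) :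
    HasDerivAt (expRpowPoly (s + 1) p)
      (expRpowPoly s (C ((s : ℂ) + 1) * p + X * (derivative p - p)) x) x := by
  have hexp : HasDerivAt (fun y : ℝ => Real.exp (-y)) (-Real.exp (-x)) x := by
    simpa using (hasDerivAt_neg x).exp
  have hpow : HasDerivAt (fun y : ℝ => y ^ (s + 1)) ((s + 1) * x ^ s) x := by
    simpa using Real.hasDerivAt_rpow_const (x := x) (p := s + 1) (Or.inl hx.ne')
  refine (((hexp.mul hpow).ofReal_comp).mul (p.hasDerivAt (x : ℂ)).comp_ofReal).congr_deriv ?_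
  simp only [expRpowPoly, Pi.mul_apply, eval_add, eval_mul, eval_sub, eval_C, eval_X]
  rw [Real.rpow_add_one hx.ne' s]
  push_cast
  ring

/-- The integrand is the derivative of `e^{-x} x^{s+1} p(x)`, which vanishes at `0` and `∞`. -/
lemma integral_expRpowPoly_eq_zero {s : ℝ} (hs : -1 < s) (p : ℂ[X]) :
    ∫ x in Set.Ioi 0, expRpowPoly s (C ((s : ℂ) + 1) * p + X * (derivative p - p)) x = 0 := by
  have hs' : 0 < s + 1 := by linarith
  rw [integral_Ioi_of_hasDerivAt_of_tendsto (continuousWithinAt_expRpowPoly hs' p)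
    (fun x hx => hasDerivAt_expRpowPoly s p hx) (integrableOn_expRpowPoly hs _)
    (tendsto_expRpowPoly_atTop (s + 1) p)]
  simp [expRpowPoly, Real.zero_rpow hs'.ne']

def matC : MatC N →+* MatPoly N := (C : ℂ →+* ℂ[X]).mapMatrix

@[simp] lemma matC_apply (M : MatC N) (i j : Fin N) : matC M i j = C (M i j) := rfl

def DegreeLE (Q : MatPoly N) (d : ℕ) : Prop := ∀ k, d < k → pCoeff Q k = 0

section Eval

variable (x : ℝ)

lemma pEval_mul (Q R : MatPoly N) : pEval (Q * R) x = pEval Q x * pEval R x :=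
  map_mul (evalRingHom (x : ℂ)).mapMatrix Q R

lemma pEval_add (Q R : MatPoly N) : pEval (Q + R) x = pEval Q x + pEval R x :=
  map_add (evalRingHom (x : ℂ)).mapMatrix Q R

lemma pEval_sub (Q R : MatPoly N) : pEval (Q - R) x = pEval Q x - pEval R x :=
  map_sub (evalRingHom (x : ℂ)).mapMatrix Q R

lemma pEval_zero : pEval (0 : MatPoly N) x = 0 :=
  map_zero (evalRingHom (x : ℂ)).mapMatrix

lemma pEval_one : pEval (1 : MatPoly N) x = 1 :=
  map_one (evalRingHom (x : ℂ)).mapMatrix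

lemma pEval_sum {ι : Type*} (s : Finset ι) (Q : ι → MatPoly N) :
    pEval (∑ l ∈ s, Q l) x = ∑ l ∈ s, pEval (Q l) x :=
  map_sum (evalRingHom (x : ℂ)).mapMatrix Q s

@[simp] lemma pEval_matC (M : MatC N) : pEval (matC M) x = M := by
  ext i j; simp [pEval]

lemma pEval_smul (q : ℂ[X]) (Q : MatPoly N) : pEval (q • Q) x = q.eval (x : ℂ) • pEval Q x := by
  ext i j; simp [pEval]

end Eval

lemma pDeriv_sum {ι : Type*} (s : Finset ι) (Q : ι → MatPoly N) :
    pDeriv (∑ l ∈ s, Q l) = ∑ l ∈ s, pDeriv (Q l) :=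
  map_sum (derivative : ℂ[X] →ₗ[ℂ] ℂ[X]).toAddMonoidHom.mapMatrix Q s

lemma pDeriv_mul (Q R : MatPoly N) : pDeriv (Q * R) = pDeriv Q * R + Q * pDeriv R := by
  ext i j
  simp [pDeriv, Matrix.mul_apply, derivative_mul, Finset.sum_add_distrib]

lemma pDeriv_one : pDeriv (1 : MatPoly N) = 0 := by
  ext i j
  by_cases h : i = j <;> simp [pDeriv, h]

lemma pDeriv_smul_matC (q : ℂ[X]) (M : MatC N) : pDeriv (q • matC M) = derivative q • matC M := by
  ext i j; simp [pDeriv]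

lemma pCoeff_add (Q R : MatPoly N) (k : ℕ) : pCoeff (Q + R) k = pCoeff Q k + pCoeff R k :=
  map_add (lcoeff ℂ k).toAddMonoidHom.mapMatrix Q R

lemma pCoeff_sub (Q R : MatPoly N) (k : ℕ) : pCoeff (Q - R) k = pCoeff Q k - pCoeff R k :=
  map_sub (lcoeff ℂ k).toAddMonoidHom.mapMatrix Q R

lemma pCoeff_sum {ι : Type*} (s : Finset ι) (Q : ι → MatPoly N) (k : ℕ) :
    pCoeff (∑ l ∈ s, Q l) k = ∑ l ∈ s, pCoeff (Q l) k :=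
  map_sum (lcoeff ℂ k).toAddMonoidHom.mapMatrix Q s

lemma pCoeff_matC_mul (M : MatC N) (Q : MatPoly N) (k : ℕ) :
    pCoeff (matC M * Q) k = M * pCoeff Q k := by
  ext i j; simp [pCoeff, Matrix.mul_apply]

lemma pCoeff_mul_matC (Q : MatPoly N) (M : MatC N) (k : ℕ) :
    pCoeff (Q * matC M) k = pCoeff Q k * M := by
  ext i j; simp [pCoeff, Matrix.mul_apply]

lemma pCoeff_X_smul_succ (Q : MatPoly N) (k : ℕ) :
    pCoeff ((X : ℂ[X]) • Q) (k + 1) = pCoeff Q k := by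
  ext i j; simp [pCoeff, coeff_X_mul]

lemma pCoeff_X_smul_zero (Q : MatPoly N) : pCoeff ((X : ℂ[X]) • Q) 0 = 0 := by
  ext i j; simp [pCoeff]

lemma pCoeff_pDeriv (Q : MatPoly N) (k : ℕ) :
    pCoeff (pDeriv Q) k = ((k : ℂ) + 1) • pCoeff Q (k + 1) := by
  ext i j; simp [pCoeff, pDeriv, coeff_derivative, mul_comm]

lemma eq_matC_of_degreeLE_zero {Q : MatPoly N} (hQ : DegreeLE Q 0) : Q = matC (pCoeff Q 0) := by
  ext i j (_ | k)
  · simp [pCoeff]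
  · simpa [pCoeff] using congrFun (congrFun (hQ (k + 1) k.succ_pos) i) j

def expPoly (M : MatC N) (m : ℕ) : MatPoly N :=
  ∑ n ∈ Finset.range m, (C ((n.factorial : ℂ)⁻¹) * X ^ n) • matC (M ^ n)

lemma pEval_expPoly {M : MatC N} {m : ℕ} (hM : M ^ m = 0) (x : ℝ) :
    pEval (expPoly M m) x = NormedSpace.exp ((x : ℂ) • M) := by
  rw [NormedSpace.exp_eq_tsum ℂ]
  beta_reduce
  rw [tsum_eq_sum (s := Finset.range m), expPoly, pEval_sum]
  · refine Finset.sum_congr rfl fun n _ => ?_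
    rw [pEval_smul, pEval_matC, _root_.smul_pow, smul_smul]
    simp
  · intro n hn
    rw [_root_.smul_pow, pow_eq_zero_of_le (by simpa using hn) hM, smul_zero, smul_zero]

lemma derivative_expPoly_coeff_succ (n : ℕ) :
    derivative (C (((n + 1).factorial : ℂ)⁻¹) * X ^ (n + 1)) = C ((n.factorial : ℂ)⁻¹) * X ^ n := by
  rw [derivative_C_mul_X_pow, Nat.add_sub_cancel, Nat.factorial_succ]
  congr 2
  push_cast
  field_simp

lemma X_mul_derivative_C_mul_X_pow (c : ℂ) (n : ℕ) :
    X * derivative (C c * X ^ n) = C (n : ℂ) * (C c * X ^ n) := by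
  rcases n with _ | n
  · simp
  · rw [derivative_C_mul_X_pow, Nat.add_sub_cancel, C_mul, pow_succ]
    ring

lemma pDeriv_expPoly {M : MatC N} {m : ℕ} (hM : M ^ m = 0) :
    pDeriv (expPoly M m) = matC M * expPoly M m := by
  rcases m with _ | m
  · simp [expPoly, pDeriv]
  rw [expPoly, pDeriv_sum, Finset.mul_sum, Finset.sum_range_succ', Finset.sum_range_succ]
  simp only [pDeriv_smul_matC, derivative_expPoly_coeff_succ, Matrix.mul_smul, ← map_mul,
    ← pow_succ', hM, map_zero, smul_zero, add_zero]
  simp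

lemma matC_mul_expPoly {J M : MatC N} (hJM : J * M = M * J + M) (m : ℕ) :
    matC J * expPoly M m = expPoly M m * matC J + (X : ℂ[X]) • pDeriv (expPoly M m) := by
  have hpow : ∀ n : ℕ, J * M ^ n = M ^ n * J + (n : ℂ) • M ^ n := by
    intro n
    induction n with
    | zero => simp
    | succ n ih =>
      rw [pow_succ, ← mul_assoc, ih, add_mul, smul_mul_assoc, mul_assoc, hJM]
      simp only [mul_add, ← mul_assoc, ← pow_succ, Nat.cast_succ, add_smul, one_smul]
      abel
  simp only [expPoly, Finset.mul_sum, Finset.sum_mul, pDeriv_sum, Finset.smul_sum,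
    ← Finset.sum_add_distrib]
  refine Finset.sum_congr rfl fun n _ => ?_
  rw [pDeriv_smul_matC, Matrix.mul_smul, ← map_mul, hpow, map_add, smul_add, smul_mul_assoc,
    ← map_mul, smul_smul]
  congr 1
  ext i j : 1
  rw [Matrix.smul_apply, Matrix.smul_apply, matC_apply, matC_apply, Matrix.smul_apply,
    smul_eq_mul, smul_eq_mul, smul_eq_mul, C_mul, X_mul_derivative_C_mul_X_pow]
  ring

lemma Amat_pow_apply_eq_zero (m : ℕ) {i j : Fin N} (hij : (i : ℕ) ≠ j + m) :
    (Amat N a ^ m) i j = 0 := by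
  induction m generalizing i j with
  | zero => exact Matrix.one_apply_ne (fun h => hij (by simp [h]))
  | succ m ih =>
    rw [pow_succ, Matrix.mul_apply]
    refine Finset.sum_eq_zero fun l _ => ?_
    by_cases hl : (l : ℕ) = j + 1
    · rw [ih (by omega), zero_mul]
    · simp [Amat, hl]

lemma Amat_pow_eq_zero : Amat N a ^ N = 0 := by
  ext i j
  exact Amat_pow_apply_eq_zero N (by omega)

lemma Jmat_mul_Amat : Jmat N * Amat N a = Amat N a * Jmat N + Amat N a := by
  ext i j
  simp only [Jmat, Amat, Matrix.diagonal_mul, Matrix.mul_diagonal, Matrix.add_apply,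
    Matrix.of_apply]
  split_ifs with h
  · rw [h]; push_cast; ring
  · simp

lemma Jmat_conjTranspose : (Jmat N)ᴴ = Jmat N := by
  simp [Jmat, Matrix.diagonal_conjTranspose]

def expAmat (N : ℕ) (a : ℕ → ℝ) : MatPoly N := expPoly (Amat N a) N

lemma pDeriv_expAmat : pDeriv (expAmat N a) = matC (Amat N a) * expAmat N a :=
  pDeriv_expPoly Amat_pow_eq_zero

lemma matC_Jmat_mul_expAmat :
    matC (Jmat N) * expAmat N a =
      expAmat N a * matC (Jmat N) + (X : ℂ[X]) • (matC (Amat N a) * expAmat N a) := by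
  rw [expAmat, matC_mul_expPoly Jmat_mul_Amat, pDeriv_expPoly Amat_pow_eq_zero]

lemma Wmat_eq (x : ℝ) :
    Wmat N a ν δ x = pEval (expAmat N a) x * Tmat N ν δ x * (pEval (expAmat N a) x)ᴴ := by
  rw [Wmat, expAmat, pEval_expPoly Amat_pow_eq_zero, ← Matrix.exp_conjTranspose,
    Matrix.conjTranspose_smul, Complex.star_def, Complex.conj_ofReal]

lemma Wmat_conjTranspose (x : ℝ) : (Wmat N a ν δ x)ᴴ = Wmat N a ν δ x := by
  have hT : (Tmat N ν δ x)ᴴ = Tmat N ν δ x := by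
    simp only [Tmat, Matrix.diagonal_conjTranspose, Pi.star_def, Complex.star_def,
      Complex.conj_ofReal]
  rw [Wmat_eq, Matrix.conjTranspose_mul, Matrix.conjTranspose_mul, hT,
    Matrix.conjTranspose_conjTranspose, mul_assoc]

section MatrixIntegral

variable {α : Type*} [MeasurableSpace α] {μ : Measure α} {F : α → MatC N}

lemma integral_matrix_apply (hF : ∀ i j, Integrable (fun x => F x i j) μ) (i j : Fin N) :
    (∫ x, F x ∂μ) i j = ∫ x, F x i j ∂μ := by
  rw [← eval_integral (hF i) j]
  exact congrFun (eval_integral (f := fun x => (F x : Fin N → Fin N → ℂ))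
    (fun i => Integrable.of_eval (hF i)) i) j

lemma integral_mul_left_matrix (M : MatC N) (hF : ∀ i j, Integrable (fun x => F x i j) μ) :
    ∫ x, M * F x ∂μ = M * ∫ x, F x ∂μ :=
  (LinearMap.mulLeft ℂ M).toContinuousLinearMap.integral_comp_comm
    (Integrable.of_eval fun i => Integrable.of_eval (hF i))

lemma integral_conjTranspose_matrix (hF : ∀ i j, Integrable (fun x => F x i j) μ) :
    ∫ x, (F x)ᴴ ∂μ = (∫ x, F x ∂μ)ᴴ :=
  (starL' ℝ : MatC N ≃L[ℝ] MatC N).toContinuousLinearMap.integral_comp_comm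
    (Integrable.of_eval fun i => Integrable.of_eval (hF i))

end MatrixIntegral

def ip (a : ℕ → ℝ) (ν : ℝ) (δ : ℕ → ℝ) (Q R : MatPoly N) : MatC N :=
  ∫ x in Set.Ioi 0, pEval Q x * Wmat N a ν δ x * (pEval R x)ᴴ

/-- With `B = e^{xA}`, the `k`-th term of `(Q W Rᴴ) i j = ∑ₖ (Q B) i k T k k conj ((R B) j k)`,
stripped of `e^{-x} x^{ν+k+1}`. -/
def entryPoly (a : ℕ → ℝ) (δ : ℕ → ℝ) (Q R : MatPoly N) (i j k : Fin N) : ℂ[X] :=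
  C (δ (k + 1) : ℂ) * (Q * expAmat N a) i k * ((R * expAmat N a) j k).map (starRingEnd ℂ)

lemma integrand_apply (Q R : MatPoly N) (x : ℝ) (i j : Fin N) :
    (pEval Q x * Wmat N a ν δ x * (pEval R x)ᴴ) i j =
      ∑ k : Fin N, expRpowPoly (ν + k + 1) (entryPoly a δ Q R i j k) x := by
  have hconj : ((x : ℂ)) = starRingEnd ℂ (x : ℂ) := (Complex.conj_ofReal x).symm
  have hW : pEval Q x * Wmat N a ν δ x * (pEval R x)ᴴ =
      pEval (Q * expAmat N a) x * Tmat N ν δ x * (pEval (R * expAmat N a) x)ᴴ := by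
    rw [Wmat_eq, pEval_mul, pEval_mul, Matrix.conjTranspose_mul]
    noncomm_ring
  rw [hW, Matrix.mul_apply]
  refine Finset.sum_congr rfl fun k _ => ?_
  simp only [Tmat, Matrix.mul_diagonal, Matrix.conjTranspose_apply, expRpowPoly, entryPoly,
    eval_mul, eval_C, pEval]
  rw [hconj, eval_map_apply, ← hconj]
  simp only [Matrix.map_apply, Complex.star_def]
  push_cast
  ring

lemma integrableOn_integrand_apply (hν : -1 < ν) (Q R : MatPoly N) (i j : Fin N) :
    IntegrableOn (fun x => (pEval Q x * Wmat N a ν δ x * (pEval R x)ᴴ) i j) (Set.Ioi 0) := by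
  simp only [integrand_apply]
  exact integrable_finsetSum _ fun k _ =>
    integrableOn_expRpowPoly (by linarith [(k : ℕ).cast_nonneg (α := ℝ)]) _

lemma ip_apply (hν : -1 < ν) (Q R : MatPoly N) (i j : Fin N) :
    ip a ν δ Q R i j =
      ∑ k : Fin N, ∫ x in Set.Ioi 0, expRpowPoly (ν + k + 1) (entryPoly a δ Q R i j k) x := by
  rw [ip, integral_matrix_apply (integrableOn_integrand_apply hν Q R)]
  simp only [integrand_apply]
  exact integral_finsetSum _ fun k _ =>
    integrableOn_expRpowPoly (by linarith [(k : ℕ).cast_nonneg (α := ℝ)]) _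

lemma ip_conjTranspose (hν : -1 < ν) (Q R : MatPoly N) : (ip a ν δ Q R)ᴴ = ip a ν δ R Q := by
  rw [ip, ← integral_conjTranspose_matrix (integrableOn_integrand_apply hν Q R), ip]
  simp [Matrix.conjTranspose_mul, Wmat_conjTranspose, Matrix.mul_assoc]

lemma ip_sum_left (hν : -1 < ν) {ι : Type*} (s : Finset ι) (M : ι → MatC N) (Q : ι → MatPoly N)
    (R : MatPoly N) :
    ip a ν δ (∑ l ∈ s, matC (M l) * Q l) R = ∑ l ∈ s, M l * ip a ν δ (Q l) R := by
  have hF := fun l => integrableOn_integrand_apply (a := a) (δ := δ) hν (Q l) R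
  calc ip a ν δ (∑ l ∈ s, matC (M l) * Q l) R
      = ∫ x in Set.Ioi 0, ∑ l ∈ s, M l * (pEval (Q l) x * Wmat N a ν δ x * (pEval R x)ᴴ) := by
        simp only [ip, pEval_sum, pEval_mul, pEval_matC, Finset.sum_mul, Matrix.mul_assoc]
    _ = ∑ l ∈ s, M l * ip a ν δ (Q l) R := by
        rw [integral_finsetSum s fun l _ => ?_]
        · exact Finset.sum_congr rfl fun l _ => integral_mul_left_matrix (M l) (hF l)
        · exact (LinearMap.mulLeft ℂ (M l)).toContinuousLinearMap.integrable_comp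
            (Integrable.of_eval fun i => Integrable.of_eval (hF l i))

def diffOp (a : ℕ → ℝ) (Q : MatPoly N) : MatPoly N :=
  (X : ℂ[X]) • pDeriv Q + (X : ℂ[X]) • (Q * matC (Amat N a - 1))

/-- By `ip_diffOp_add_ip_diffOpAdj`, this is minus the adjoint of `diffOp a` for `ip a ν δ`. -/
def diffOpAdj (ν : ℝ) (Q : MatPoly N) : MatPoly N :=
  (X : ℂ[X]) • pDeriv Q + Q * matC (((1 : ℂ) + ν) • 1 + Jmat N)

lemma matC_smul (c : ℂ) (M : MatC N) : matC (c • M) = C c • matC M := by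
  ext i j; simp [smul_eq_mul]

lemma diffOp_mul_expAmat (Q : MatPoly N) :
    diffOp a Q * expAmat N a =
      (X : ℂ[X]) • pDeriv (Q * expAmat N a) - (X : ℂ[X]) • (Q * expAmat N a) := by
  rw [diffOp, pDeriv_mul, pDeriv_expAmat, map_sub, map_one]
  simp only [add_mul, Matrix.smul_mul, mul_sub, sub_mul, mul_one, Matrix.mul_assoc, smul_add,
    smul_sub]
  abel

lemma diffOpAdj_mul_expAmat (R : MatPoly N) :
    diffOpAdj ν R * expAmat N a =
      (X : ℂ[X]) • pDeriv (R * expAmat N a) + C ((1 : ℂ) + ν) • (R * expAmat N a) +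
        R * expAmat N a * matC (Jmat N) := by
  rw [diffOpAdj, pDeriv_mul, pDeriv_expAmat, map_add, matC_smul, map_one]
  simp only [add_mul, mul_add, Matrix.smul_mul, Matrix.mul_smul, mul_one,
    Matrix.mul_assoc, matC_Jmat_mul_expAmat, smul_add]
  abel

lemma entryPoly_diffOp_add_entryPoly_diffOpAdj (Q R : MatPoly N) (i j k : Fin N) :
    entryPoly a δ (diffOp a Q) R i j k + entryPoly a δ Q (diffOpAdj ν R) i j k =
      C (((ν + k + 1 : ℝ) : ℂ) + 1) * entryPoly a δ Q R i j k +
        X * (derivative (entryPoly a δ Q R i j k) - entryPoly a δ Q R i j k) := by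
  have hS : (diffOp a Q * expAmat N a) i k =
      X * derivative ((Q * expAmat N a) i k) - X * (Q * expAmat N a) i k := by
    simp [diffOp_mul_expAmat, pDeriv]
  have hT : (diffOpAdj ν R * expAmat N a) j k =
      X * derivative ((R * expAmat N a) j k) + C ((1 : ℂ) + ν) * (R * expAmat N a) j k +
        (R * expAmat N a) j k * C ((k : ℂ) + 1) := by
    simp [diffOpAdj_mul_expAmat, pDeriv, Jmat, matC, Matrix.diagonal_map]
  rw [entryPoly, entryPoly, entryPoly, hS, hT]
  simp only [Polynomial.map_add, Polynomial.map_mul, map_X, map_C, ← derivative_map,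
    derivative_mul, derivative_C, map_add, map_one, map_natCast, Complex.conj_ofReal,
    Polynomial.map_one, Polynomial.map_natCast]
  push_cast
  simp only [map_add, map_one, map_natCast]
  ring

lemma ip_diffOp_add_ip_diffOpAdj (hν : -1 < ν) (Q R : MatPoly N) :
    ip a ν δ (diffOp a Q) R + ip a ν δ Q (diffOpAdj ν R) = 0 := by
  ext i j
  rw [Matrix.add_apply, ip_apply hν, ip_apply hν, ← Finset.sum_add_distrib, Matrix.zero_apply]
  refine Finset.sum_eq_zero fun k _ => ?_
  have hs : -1 < ν + k + 1 := by linarith [(k : ℕ).cast_nonneg (α := ℝ)]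
  rw [← integral_add (integrableOn_expRpowPoly hs _) (integrableOn_expRpowPoly hs _)]
  simp only [← expRpowPoly_add, entryPoly_diffOp_add_entryPoly_diffOpAdj]
  exact integral_expRpowPoly_eq_zero hs _

lemma ip_diffOp_left (hν : -1 < ν) (Q R : MatPoly N) :
    ip a ν δ (diffOp a Q) R = -(ip a ν δ (diffOpAdj ν R) Q)ᴴ := by
  rw [ip_conjTranspose hν, eq_neg_of_add_eq_zero_left (ip_diffOp_add_ip_diffOpAdj hν Q R)]

lemma ip_diffOpAdj_left (hν : -1 < ν) (Q R : MatPoly N) :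
    ip a ν δ (diffOpAdj ν Q) R = -(ip a ν δ (diffOp a R) Q)ᴴ := by
  rw [← ip_conjTranspose hν R, eq_neg_of_add_eq_zero_right (ip_diffOp_add_ip_diffOpAdj hν R Q),
    Matrix.conjTranspose_neg]

lemma pEval_diffOp (Q : MatPoly N) (x : ℝ) :
    pEval (diffOp a Q) x =
      (x : ℂ) • pEval (pDeriv Q) x + (x : ℂ) • (pEval Q x * (Amat N a - 1)) := by
  simp [diffOp, pEval_add, pEval_smul, pEval_mul, pEval_sub, pEval_one]

lemma pEval_diffOpAdj (Q : MatPoly N) (x : ℝ) :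
    pEval (diffOpAdj ν Q) x =
      (x : ℂ) • pEval (pDeriv Q) x + pEval Q x * (((1 : ℂ) + ν) • 1 + Jmat N) := by
  simp [diffOpAdj, pEval_add, pEval_smul, pEval_mul]

lemma pCoeff_X_smul_pDeriv (Q : MatPoly N) (k : ℕ) :
    pCoeff ((X : ℂ[X]) • pDeriv Q) k = (k : ℂ) • pCoeff Q k := by
  rcases k with _ | k
  · simp [pCoeff_X_smul_zero]
  · rw [pCoeff_X_smul_succ, pCoeff_pDeriv]
    push_cast
    rfl

lemma pCoeff_diffOp_succ (Q : MatPoly N) (k : ℕ) :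
    pCoeff (diffOp a Q) (k + 1) =
      ((k : ℂ) + 1) • pCoeff Q (k + 1) + pCoeff Q k * (Amat N a - 1) := by
  rw [diffOp, pCoeff_add, pCoeff_X_smul_pDeriv, pCoeff_X_smul_succ, pCoeff_mul_matC]
  push_cast
  rfl

lemma pCoeff_diffOpAdj (Q : MatPoly N) (k : ℕ) :
    pCoeff (diffOpAdj ν Q) k = pCoeff Q k * (((k : ℂ) + 1 + ν) • 1 + Jmat N) := by
  rw [diffOpAdj, pCoeff_add, pCoeff_X_smul_pDeriv, pCoeff_mul_matC]
  simp only [mul_add, Matrix.mul_smul, mul_one]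
  module

lemma DegreeLE.mono {Q : MatPoly N} {d e : ℕ} (hQ : DegreeLE Q d) (hde : d ≤ e) :
    DegreeLE Q e :=
  fun k hk => hQ k (hde.trans_lt hk)

lemma DegreeLE.diffOp {Q : MatPoly N} {d : ℕ} (hQ : DegreeLE Q d) :
    DegreeLE (diffOp a Q) (d + 1) := by
  rintro (_ | k) hk
  · omega
  · rw [pCoeff_diffOp_succ, hQ (k + 1) (by omega), hQ k (by omega), smul_zero, zero_mul,
      add_zero]

lemma DegreeLE.diffOpAdj {Q : MatPoly N} {d : ℕ} (hQ : DegreeLE Q d) :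
    DegreeLE (diffOpAdj ν Q) d := by
  intro k hk
  rw [pCoeff_diffOpAdj, hQ k hk, zero_mul]

lemma eq_one_of_degreeLE_zero {Q : MatPoly N} (hQ : DegreeLE Q 0) (h₀ : pCoeff Q 0 = 1) :
    Q = 1 := by
  rw [eq_matC_of_degreeLE_zero hQ, h₀, map_one]

lemma exists_eq_sum_matC_mul (hmonic : ∀ n, pCoeff (P n) n = 1) (hdeg : ∀ n, DegreeLE (P n) n)
    {Q : MatPoly N} {d : ℕ} (hQ : DegreeLE Q d) :
    ∃ M : ℕ → MatC N, Q = ∑ l ∈ Finset.range (d + 1), matC (M l) * P l := by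
  induction d generalizing Q with
  | zero =>
    refine ⟨fun _ => pCoeff Q 0, ?_⟩
    rw [Finset.sum_range_one, eq_one_of_degreeLE_zero (hdeg 0) (hmonic 0), mul_one]
    exact eq_matC_of_degreeLE_zero hQ
  | succ d ih =>
    set M₀ := pCoeff Q (d + 1)
    have hlow : DegreeLE (Q - matC M₀ * P (d + 1)) d := by
      intro k hk
      rw [pCoeff_sub, pCoeff_matC_mul]
      rcases (Nat.succ_le_of_lt hk).eq_or_lt with rfl | hk'
      · rw [hmonic, mul_one, sub_self]
      · rw [hQ k hk', hdeg (d + 1) k hk', mul_zero, sub_zero]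
    obtain ⟨M, hM⟩ := ih hlow
    refine ⟨Function.update M (d + 1) M₀, ?_⟩
    rw [Finset.sum_range_succ, Function.update_self, ← sub_eq_iff_eq_add, hM]
    refine Finset.sum_congr rfl fun l hl => ?_
    rw [Function.update_of_ne (Finset.mem_range.1 hl).ne]

lemma ip_sum_matC_mul_P (hν : -1 < ν)
    (horth : ∀ n m, ip a ν δ (P n) (P m) = if n = m then H n else 0) (M : ℕ → MatC N)
    {m d : ℕ} (hm : m ≤ d) :
    ip a ν δ (∑ l ∈ Finset.range (d + 1), matC (M l) * P l) (P m) = M m * H m := by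
  rw [ip_sum_left hν, Finset.sum_eq_single_of_mem m (Finset.mem_range.2 (by omega)), horth,
    if_pos rfl]
  intro l _ hl
  rw [horth, if_neg hl, mul_zero]

lemma ip_eq_pCoeff_mul (hν : -1 < ν) (hmonic : ∀ n, pCoeff (P n) n = 1)
    (hdeg : ∀ n, DegreeLE (P n) n)
    (horth : ∀ n m, ip a ν δ (P n) (P m) = if n = m then H n else 0)
    {Q : MatPoly N} {m : ℕ} (hQ : DegreeLE Q m) :
    ip a ν δ Q (P m) = pCoeff Q m * H m := by
  obtain ⟨M, rfl⟩ := exists_eq_sum_matC_mul hmonic hdeg hQ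
  rw [ip_sum_matC_mul_P hν horth M le_rfl, pCoeff_sum, Finset.sum_range_succ, pCoeff_matC_mul,
    hmonic, mul_one, Finset.sum_eq_zero, zero_add]
  intro l hl
  rw [pCoeff_matC_mul, hdeg l m (Finset.mem_range.1 hl), mul_zero]

lemma isHermitian_of_orthogonal (hν : -1 < ν)
    (horth : ∀ n m, ip a ν δ (P n) (P m) = if n = m then H n else 0) (n : ℕ) :
    (H n).IsHermitian := by
  have h := ip_conjTranspose (a := a) (δ := δ) hν (P n) (P n)
  rwa [horth, if_pos rfl] at h

lemma eq_matC_mul_P_succ_add_matC_mul_P (hν : -1 < ν) (hmonic : ∀ n, pCoeff (P n) n = 1)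
    (hdeg : ∀ n, DegreeLE (P n) n)
    (horth : ∀ n m, ip a ν δ (P n) (P m) = if n = m then H n else 0) (hH : ∀ n, IsUnit (H n))
    {Q : MatPoly N} {n : ℕ} (hQ : DegreeLE Q (n + 1)) (hlow : ∀ l < n, ip a ν δ Q (P l) = 0) :
    Q = matC (ip a ν δ Q (P (n + 1)) * (H (n + 1))⁻¹) * P (n + 1) +
      matC (ip a ν δ Q (P n) * (H n)⁻¹) * P n := by
  obtain ⟨M, hM⟩ := exists_eq_sum_matC_mul hmonic hdeg hQ
  have hcoeff : ∀ l ≤ n + 1, M l = ip a ν δ Q (P l) * (H l)⁻¹ := fun l hl => by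
    rw [hM, ip_sum_matC_mul_P hν horth M hl,
      Matrix.mul_nonsing_inv_cancel_right _ _ ((H l).isUnit_iff_isUnit_det.1 (hH l))]
  conv_lhs => rw [hM, Finset.sum_range_succ, Finset.sum_range_succ]
  rw [Finset.sum_eq_zero fun l hl => ?_, zero_add, hcoeff n (by omega), hcoeff (n + 1) le_rfl,
    add_comm]
  rw [hcoeff l (by simp at hl; omega), hlow l (by simpa using hl), zero_mul, map_zero, zero_mul]

lemma conjTranspose_smul_one_add_Jmat (n : ℕ) (ν : ℝ) :
    (((n : ℂ) + 1 + ν) • (1 : MatC N) + Jmat N)ᴴ = ((n : ℂ) + 1 + ν) • 1 + Jmat N := by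
  simp [Matrix.conjTranspose_add, Jmat_conjTranspose, Complex.conj_ofReal]

lemma diffOp_P_eq (hν : -1 < ν) (hmonic : ∀ n, pCoeff (P n) n = 1) (hdeg : ∀ n, DegreeLE (P n) n)
    (horth : ∀ n m, ip a ν δ (P n) (P m) = if n = m then H n else 0) (hH : ∀ n, IsUnit (H n))
    (n : ℕ) :
    diffOp a (P n) = matC (Amat N a - 1) * P (n + 1) -
      matC (H n * (((n : ℂ) + 1 + ν) • 1 + Jmat N) * (H n)⁻¹) * P n := by
  have hQ : DegreeLE (diffOp a (P n)) (n + 1) := (hdeg n).diffOp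
  have hcoeff : ∀ l ≤ n,
      ip a ν δ (diffOp a (P n)) (P l) = -(pCoeff (diffOpAdj ν (P l)) n * H n)ᴴ := fun l hl => by
    rw [ip_diffOp_left hν, ip_eq_pCoeff_mul hν hmonic hdeg horth ((hdeg l).diffOpAdj.mono hl)]
  rw [eq_matC_mul_P_succ_add_matC_mul_P hν hmonic hdeg horth hH hQ fun l hl => by
    rw [hcoeff l hl.le, (hdeg l).diffOpAdj n hl, zero_mul, conjTranspose_zero, neg_zero]]
  rw [ip_eq_pCoeff_mul hν hmonic hdeg horth hQ, pCoeff_diffOp_succ, hdeg n (n + 1) (by omega),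
    hmonic n, smul_zero, zero_add, one_mul,
    Matrix.mul_nonsing_inv_cancel_right _ _ ((H _).isUnit_iff_isUnit_det.1 (hH _)),
    hcoeff n le_rfl, pCoeff_diffOpAdj, hmonic n, one_mul, conjTranspose_mul,
    (isHermitian_of_orthogonal hν horth n).eq, conjTranspose_smul_one_add_Jmat, neg_mul, map_neg,
    neg_mul, ← sub_eq_add_neg]

lemma diffOpAdj_P_succ_eq (hν : -1 < ν) (hmonic : ∀ n, pCoeff (P n) n = 1)
    (hdeg : ∀ n, DegreeLE (P n) n)
    (horth : ∀ n m, ip a ν δ (P n) (P m) = if n = m then H n else 0) (hH : ∀ n, IsUnit (H n))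
    (n : ℕ) :
    diffOpAdj ν (P (n + 1)) = matC ((((n + 1 : ℕ) : ℂ) + 1 + ν) • 1 + Jmat N) * P (n + 1) -
      matC (H (n + 1) * (Amat N a - 1)ᴴ * (H n)⁻¹) * P n := by
  have hQ : DegreeLE (diffOpAdj ν (P (n + 1))) (n + 1) := (hdeg (n + 1)).diffOpAdj
  have hcoeff : ∀ l ≤ n, ip a ν δ (diffOpAdj ν (P (n + 1))) (P l) =
      -(pCoeff (diffOp a (P l)) (n + 1) * H (n + 1))ᴴ := fun l hl => by
    rw [ip_diffOpAdj_left hν,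
      ip_eq_pCoeff_mul hν hmonic hdeg horth ((hdeg l).diffOp.mono (by omega))]
  rw [eq_matC_mul_P_succ_add_matC_mul_P hν hmonic hdeg horth hH hQ fun l hl => by
    rw [hcoeff l hl.le, (hdeg l).diffOp (n + 1) (by omega), zero_mul, conjTranspose_zero,
      neg_zero]]
  rw [ip_eq_pCoeff_mul hν hmonic hdeg horth hQ, pCoeff_diffOpAdj, hmonic (n + 1), one_mul,
    Matrix.mul_nonsing_inv_cancel_right _ _ ((H _).isUnit_iff_isUnit_det.1 (hH _)),
    hcoeff n le_rfl, pCoeff_diffOp_succ, hdeg n (n + 1) (by omega), hmonic n, smul_zero,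
    zero_add, one_mul, conjTranspose_mul,
    (isHermitian_of_orthogonal hν horth (n + 1)).eq, neg_mul, map_neg, neg_mul,
    ← sub_eq_add_neg]

end MatrixLaguerre

theorem difference_differential_relations_general
    (N : ℕ) (a : ℕ → ℝ) (ν : ℝ) (hν : 0 < ν)
    (δ : ℕ → ℝ)
    (P : ℕ → MatPoly N) (H : ℕ → MatC N)
    -- `P n` is monic of degree `n`
    (hmonic : ∀ n, pCoeff (P n) n = 1)
    (hdeg : ∀ n k, n < k → pCoeff (P n) k = 0)
    -- orthogonality, with positive definite squared norms
    (horth : ∀ n m, (∫ x in Set.Ioi (0 : ℝ),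
      pEval (P n) x * Wmat N a ν δ x * (pEval (P m) x)ᴴ) = if n = m then H n else 0)
    (hpos : ∀ n, (H n).PosDef)
    :
    (∀ n : ℕ, ∀ x : ℝ, 0 < x →
      (x : ℂ) • pEval (pDeriv (P n)) x + (x : ℂ) • (pEval (P n) x * (Amat N a - 1)) =
        (Amat N a - 1) * pEval (P (n + 1)) x - (((n : ℂ) + 1 + (ν : ℂ)) • pEval (P n) x) -
          H n * Jmat N * (H n)⁻¹ * pEval (P n) x) ∧
    (∀ n : ℕ, ∀ x : ℝ, 0 < x →
      -((x : ℂ) • pEval (pDeriv (P (n + 1))) x) -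
          pEval (P (n + 1)) x * (((1 : ℂ) + (ν : ℂ)) • (1 : MatC N) + Jmat N) =
        -((((n : ℂ) + 1 + (ν : ℂ) + 1) • (1 : MatC N) + Jmat N) * pEval (P (n + 1)) x) +
          H (n + 1) * (Amat N a - 1)ᴴ * (H n)⁻¹ * pEval (P n) x) ∧
    (∀ x : ℝ, 0 < x →
      -((x : ℂ) • pEval (pDeriv (P 0)) x) -
          pEval (P 0) x * (((1 : ℂ) + (ν : ℂ)) • (1 : MatC N) + Jmat N) =
        -((((ν : ℂ) + 1) • (1 : MatC N) + Jmat N) * pEval (P 0) x)) := by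
  open MatrixLaguerre in
  have hν' : -1 < ν := by linarith
  have hH n : IsUnit (H n) := (hpos n).isUnit
  have hH_inv n : H n * (H n)⁻¹ = 1 :=
    Matrix.mul_nonsing_inv _ ((H n).isUnit_iff_isUnit_det.1 (hH n))
  refine ⟨fun n x _ => ?_, fun n x _ => ?_, fun x _ => ?_⟩
  · have h := congrArg (pEval · x) (diffOp_P_eq hν' hmonic hdeg horth hH n)
    simp only [pEval_diffOp, pEval_sub, pEval_mul, pEval_matC] at h
    rw [h, mul_add, add_mul, Matrix.mul_smul, mul_one, Matrix.smul_mul, hH_inv, add_mul,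
      Matrix.smul_mul, one_mul, sub_add_eq_sub_sub]
  · have h := congrArg (pEval · x) (diffOpAdj_P_succ_eq (a := a) hν' hmonic hdeg horth hH n)
    simp only [pEval_diffOpAdj, pEval_sub, pEval_mul, pEval_matC] at h
    rw [← neg_add', h, neg_sub, sub_eq_neg_add]
    push_cast
    rw [add_right_comm _ (1 : ℂ) (ν : ℂ)]
  · rw [eq_one_of_degreeLE_zero (hdeg 0) (hmonic 0), pDeriv_one, pEval_zero, pEval_one,
      smul_zero, neg_zero, zero_sub, one_mul, mul_one, add_comm (1 : ℂ)]

/-- Statement 10: difference–differential relations for the monic MVOPs with respect to the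
Laguerre-type weight `W^{(ν)}` (the case `φ(x) = x`). -/
theorem difference_differential_relations
    (N : ℕ) (hN : 2 ≤ N) (a : ℕ → ℝ) (ν : ℝ) (hν : 0 < ν)
    (δ : ℕ → ℝ) (hδ : ∀ k, 1 ≤ k → k ≤ N → 0 < δ k)
    (P : ℕ → MatPoly N) (H : ℕ → MatC N)
    -- `P n` is monic of degree `n`
    (hmonic : ∀ n, pCoeff (P n) n = 1)
    (hdeg : ∀ n k, n < k → pCoeff (P n) k = 0)
    -- orthogonality, with positive definite squared norms
    (hint : ∀ n m, @IntegrableOn _ _ _ _ SeminormedAddGroup.toContinuousENorm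
      (fun x : ℝ => pEval (P n) x * Wmat N a ν δ x * (pEval (P m) x)ᴴ) (Set.Ioi 0) volume)
    (horth : ∀ n m, (∫ x in Set.Ioi (0 : ℝ),
      pEval (P n) x * Wmat N a ν δ x * (pEval (P m) x)ᴴ) = if n = m then H n else 0)
    (hpos : ∀ n, (H n).PosDef)
    :
    (∀ n : ℕ, ∀ x : ℝ, 0 < x →
      (x : ℂ) • pEval (pDeriv (P n)) x + (x : ℂ) • (pEval (P n) x * (Amat N a - 1)) =
        (Amat N a - 1) * pEval (P (n + 1)) x - (((n : ℂ) + 1 + (ν : ℂ)) • pEval (P n) x) -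
          H n * Jmat N * (H n)⁻¹ * pEval (P n) x) ∧
    (∀ n : ℕ, ∀ x : ℝ, 0 < x →
      -((x : ℂ) • pEval (pDeriv (P (n + 1))) x) -
          pEval (P (n + 1)) x * (((1 : ℂ) + (ν : ℂ)) • (1 : MatC N) + Jmat N) =
        -((((n : ℂ) + 1 + (ν : ℂ) + 1) • (1 : MatC N) + Jmat N) * pEval (P (n + 1)) x) +
          H (n + 1) * (Amat N a - 1)ᴴ * (H n)⁻¹ * pEval (P n) x) ∧
    (∀ x : ℝ, 0 < x →
      -((x : ℂ) • pEval (pDeriv (P 0)) x) -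
          pEval (P 0) x * (((1 : ℂ) + (ν : ℂ)) • (1 : MatC N) + Jmat N) =
        -((((ν : ℂ) + 1) • (1 : MatC N) + Jmat N) * pEval (P 0) x)) :=
  difference_differential_relations_general N a ν hν δ P H hmonic hdeg horth hpos
end
end

section
/- In the Lie algebra of right-acting operators on smooth matrix-valued functions, with φ(x) = x, the following bracket identities hold: [𝒟, m] = −m; [𝒟†, m] = m; [𝒟, 𝒟†] = m; [D, m] = −𝒟 + 𝒟†; [𝒟, D] = −𝒟 + D − (1+ν)·1; and [𝒟†, D] = 𝒟† − D + (1+ν)·1. -/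
open Matrix
open scoped ContDiff

attribute [local instance] Matrix.normedAddCommGroup Matrix.normedSpace

noncomputable section

/-- the right-acting operator `𝒟`, `(Q·𝒟)(x) = x Q'(x) + x Q(x)(A−1)` -/
def OpD (N : ℕ) (a : ℕ → ℝ) : (ℝ → MatC N) → ℝ → MatC N := fun Q x =>
  (x : ℂ) • deriv Q x + (x : ℂ) • (Q x * (Amat N a - 1))

/-- the right-acting operator `𝒟†`, `(Q·𝒟†)(x) = −x Q'(x) − Q(x)(1+ν+J)` (the case `φ(x)=x`) -/
def OpDdag (N : ℕ) (ν : ℝ) : (ℝ → MatC N) → ℝ → MatC N := fun Q x =>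
  -((x : ℂ) • deriv Q x) - Q x * (((1 : ℂ) + (ν : ℂ)) • (1 : MatC N) + Jmat N)

/-- the right-acting multiplication operator `m`, `(Q·m)(x) = x Q(x)` -/
def OpM (N : ℕ) : (ℝ → MatC N) → ℝ → MatC N := fun Q x => (x : ℂ) • Q x

/-- the right-acting second-order operator `D`,
`(Q·D)(x) = x Q''(x) + Q'(x)((A−1)x + 1+ν+J) + Q(x)(Aν + JA − J)` -/
def OpD2 (N : ℕ) (a : ℕ → ℝ) (ν : ℝ) : (ℝ → MatC N) → ℝ → MatC N := fun Q x =>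
  (x : ℂ) • deriv (deriv Q) x +
    deriv Q x * ((x : ℂ) • (Amat N a - 1) + ((1 : ℂ) + (ν : ℂ)) • (1 : MatC N) + Jmat N) +
    Q x * ((ν : ℂ) • Amat N a + Jmat N * Amat N a - Jmat N)

/-- the Lie bracket of right-acting operators: since `Q·(𝒮𝒯) = (Q·𝒮)·𝒯`, the product `𝒮𝒯`
acts as `T ∘ S`, and `[𝒮,𝒯] = 𝒮𝒯 − 𝒯𝒮` acts as `Q ↦ T (S Q) − S (T Q)`. -/
def rbrk {N : ℕ} (S T : (ℝ → MatC N) → ℝ → MatC N) : (ℝ → MatC N) → ℝ → MatC N :=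
  fun Q => T (S Q) - S (T Q)

/-!
All four operators have coefficients at most linear in `x`, with constant matrices acting on the
right, so each commutes with `d/dx` up to lower-order terms: `(Q·m)' = Q'·m + Q`,
`(Q·𝒟)' = Q'·𝒟 + Q' + Q(A−1)`, `(Q·𝒟†)' = Q'·𝒟† − Q'` and `(Q·D)' = Q'·D + Q'' + Q'(A−1)`.
Substituting these rules turns every bracket into an identity between expressions in
`Q, Q', Q'', Q'''` with noncommuting constant matrix coefficients, which holds using only the
relation `[J, A] = A`.
-/

theorem Amat_mul_Jmat (N : ℕ) (a : ℕ → ℝ) :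
    Amat N a * Jmat N = Jmat N * Amat N a - Amat N a := by
  ext i j
  simp only [Jmat, Amat, mul_diagonal, diagonal_mul, Matrix.sub_apply, of_apply]
  split_ifs with h
  · rw [h]; push_cast; ring
  · ring

theorem Amat_mul_Jmat_mul (N : ℕ) (a : ℕ → ℝ) (X : MatC N) :
    Amat N a * (Jmat N * X) = Jmat N * (Amat N a * X) - Amat N a * X := by
  rw [← mul_assoc, Amat_mul_Jmat, sub_mul, mul_assoc]

section Calculus

variable {m n : Type*} [Fintype m] [Fintype n] {x : ℝ}

theorem HasDerivAt.ofReal_smul {f : ℝ → Matrix m n ℂ} {f' : Matrix m n ℂ}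
    (hf : HasDerivAt f f' x) :
    HasDerivAt (fun y : ℝ => (y : ℂ) • f y) ((x : ℂ) • f' + f x) x := by
  have h := (hasDerivAt_id x).ofReal_comp.smul hf
  simp only [id, Complex.ofReal_one, one_smul] at h
  exact h

/- `(hf t).hasDerivAt` alone elaborates `deriv f t` through the local normed-group instance;
stated here, it carries `Matrix.addCommGroup` as in the operator definitions, so that `abel` and
`ring` recognise the two as the same atom. -/
theorem hasDerivAt_deriv_of_differentiable {f : ℝ → Matrix m n ℂ} (hf : Differentiable ℝ f)
    (t : ℝ) : HasDerivAt f (deriv f t) t :=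
  (hf t).hasDerivAt

/- `HasDerivAt.mul_const` needs a `NormedRing`, which the entrywise sup norm is not. -/
theorem HasDerivAt.matrix_mul_const {f : ℝ → Matrix n n ℂ} {f' : Matrix n n ℂ}
    (hf : HasDerivAt f f' x) (M : Matrix n n ℂ) :
    HasDerivAt (fun y => f y * M) (f' * M) x :=
  (LinearMap.toContinuousLinearMap
    ((LinearMap.mulRight ℂ M).restrictScalars ℝ)).hasFDerivAt.comp_hasDerivAt x hf

end Calculus

section Operators

variable {N : ℕ} (a : ℕ → ℝ) (ν : ℝ) {Q : ℝ → MatC N}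

theorem opM_apply (t : ℝ) : OpM N Q t = (t : ℂ) • Q t := rfl

theorem opD_apply (t : ℝ) :
    OpD N a Q t = (t : ℂ) • deriv Q t + (t : ℂ) • (Q t * (Amat N a - 1)) := rfl

theorem opDdag_apply (t : ℝ) :
    OpDdag N ν Q t = -((t : ℂ) • deriv Q t) - Q t * (((1 : ℂ) + (ν : ℂ)) • 1 + Jmat N) :=
  rfl

theorem opD2_apply (t : ℝ) :
    OpD2 N a ν Q t = (t : ℂ) • deriv (deriv Q) t +
      deriv Q t * ((t : ℂ) • (Amat N a - 1) + ((1 : ℂ) + (ν : ℂ)) • 1 + Jmat N) +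
      Q t * ((ν : ℂ) • Amat N a + Jmat N * Amat N a - Jmat N) := rfl

theorem hasDerivAt_opM (hQ : Differentiable ℝ Q) (t : ℝ) :
    HasDerivAt (OpM N Q) (OpM N (deriv Q) t + Q t) t :=
  (hasDerivAt_deriv_of_differentiable hQ t).ofReal_smul

theorem deriv_opM (hQ : Differentiable ℝ Q) (t : ℝ) :
    deriv (OpM N Q) t = OpM N (deriv Q) t + Q t :=
  (hasDerivAt_opM hQ t).deriv

theorem hasDerivAt_opD (hQ : Differentiable ℝ Q) (hQ' : Differentiable ℝ (deriv Q)) (t : ℝ) :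
    HasDerivAt (OpD N a Q) (OpD N a (deriv Q) t + deriv Q t + Q t * (Amat N a - 1)) t := by
  refine ((hasDerivAt_deriv_of_differentiable hQ' t).ofReal_smul.add
    ((hasDerivAt_deriv_of_differentiable hQ t).matrix_mul_const _).ofReal_smul).congr_deriv ?_
  rw [opD_apply]
  abel

theorem deriv_opD (hQ : Differentiable ℝ Q) (hQ' : Differentiable ℝ (deriv Q)) (t : ℝ) :
    deriv (OpD N a Q) t = OpD N a (deriv Q) t + deriv Q t + Q t * (Amat N a - 1) :=
  (hasDerivAt_opD a hQ hQ' t).deriv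

theorem hasDerivAt_opDdag (hQ : Differentiable ℝ Q) (hQ' : Differentiable ℝ (deriv Q))
    (t : ℝ) :
    HasDerivAt (OpDdag N ν Q) (OpDdag N ν (deriv Q) t - deriv Q t) t := by
  refine ((hasDerivAt_deriv_of_differentiable hQ' t).ofReal_smul.neg.sub
    ((hasDerivAt_deriv_of_differentiable hQ t).matrix_mul_const _)).congr_deriv ?_
  rw [opDdag_apply]
  abel

theorem deriv_opDdag (hQ : Differentiable ℝ Q) (hQ' : Differentiable ℝ (deriv Q)) (t : ℝ) :
    deriv (OpDdag N ν Q) t = OpDdag N ν (deriv Q) t - deriv Q t :=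
  (hasDerivAt_opDdag ν hQ hQ' t).deriv

theorem hasDerivAt_opD2 (hQ : Differentiable ℝ Q) (hQ' : Differentiable ℝ (deriv Q))
    (hQ'' : Differentiable ℝ (deriv (deriv Q))) (t : ℝ) :
    HasDerivAt (OpD2 N a ν Q)
      (OpD2 N a ν (deriv Q) t + deriv (deriv Q) t + deriv Q t * (Amat N a - 1)) t := by
  have h_expand : OpD2 N a ν Q = fun y : ℝ => (y : ℂ) • deriv (deriv Q) y +
      ((y : ℂ) • (deriv Q y * (Amat N a - 1)) + deriv Q y * (((1 : ℂ) + ν) • 1 + Jmat N)) +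
      Q y * ((ν : ℂ) • Amat N a + Jmat N * Amat N a - Jmat N) := by
    funext y
    simp only [opD2_apply, mul_add, mul_smul_comm]
    abel
  rw [h_expand]
  refine ((hasDerivAt_deriv_of_differentiable hQ'' t).ofReal_smul.add
    (((hasDerivAt_deriv_of_differentiable hQ' t).matrix_mul_const _).ofReal_smul.add
      ((hasDerivAt_deriv_of_differentiable hQ' t).matrix_mul_const _)) |>.add
    ((hasDerivAt_deriv_of_differentiable hQ t).matrix_mul_const _)).congr_deriv ?_
  simp only [opD2_apply, mul_add, mul_smul_comm]
  abel

theorem deriv_opD2 (hQ : Differentiable ℝ Q) (hQ' : Differentiable ℝ (deriv Q))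
    (hQ'' : Differentiable ℝ (deriv (deriv Q))) (t : ℝ) :
    deriv (OpD2 N a ν Q) t =
      OpD2 N a ν (deriv Q) t + deriv (deriv Q) t + deriv Q t * (Amat N a - 1) :=
  (hasDerivAt_opD2 a ν hQ hQ' hQ'' t).deriv

theorem deriv_deriv_opM (hQ : Differentiable ℝ Q) (hQ' : Differentiable ℝ (deriv Q)) (t : ℝ) :
    deriv (deriv (OpM N Q)) t = OpM N (deriv (deriv Q)) t + deriv Q t + deriv Q t := by
  rw [funext (deriv_opM hQ)]
  exact ((hasDerivAt_opM hQ' t).add (hasDerivAt_deriv_of_differentiable hQ t)).deriv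

theorem deriv_deriv_opD (hQ : Differentiable ℝ Q) (hQ' : Differentiable ℝ (deriv Q))
    (hQ'' : Differentiable ℝ (deriv (deriv Q))) (t : ℝ) :
    deriv (deriv (OpD N a Q)) t =
      OpD N a (deriv (deriv Q)) t + deriv (deriv Q) t + deriv Q t * (Amat N a - 1) +
        deriv (deriv Q) t + deriv Q t * (Amat N a - 1) := by
  rw [funext (deriv_opD a hQ hQ')]
  exact (((hasDerivAt_opD a hQ' hQ'' t).add (hasDerivAt_deriv_of_differentiable hQ' t)).add
    ((hasDerivAt_deriv_of_differentiable hQ t).matrix_mul_const _)).deriv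

theorem deriv_deriv_opDdag (hQ : Differentiable ℝ Q) (hQ' : Differentiable ℝ (deriv Q))
    (hQ'' : Differentiable ℝ (deriv (deriv Q))) (t : ℝ) :
    deriv (deriv (OpDdag N ν Q)) t =
      OpDdag N ν (deriv (deriv Q)) t - deriv (deriv Q) t - deriv (deriv Q) t := by
  rw [funext (deriv_opDdag ν hQ hQ')]
  exact ((hasDerivAt_opDdag ν hQ' hQ'' t).sub (hasDerivAt_deriv_of_differentiable hQ' t)).deriv

end Operators

section Brackets

variable {N : ℕ} (a : ℕ → ℝ) (ν : ℝ) {Q : ℝ → MatC N}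

theorem rbrk_opD_opM (hQ : Differentiable ℝ Q) (t : ℝ) :
    rbrk (OpD N a) (OpM N) Q t = -OpM N Q t := by
  simp only [rbrk, Pi.sub_apply, opD_apply, deriv_opM hQ, opM_apply]
  simp only [mul_sub, smul_mul_assoc, mul_one, smul_add, smul_sub, smul_smul]
  match_scalars <;> ring

theorem rbrk_opDdag_opM (hQ : Differentiable ℝ Q) (t : ℝ) :
    rbrk (OpDdag N ν) (OpM N) Q t = OpM N Q t := by
  simp only [rbrk, Pi.sub_apply, opDdag_apply, deriv_opM hQ, opM_apply]
  simp only [mul_add, add_mul, smul_mul_assoc, mul_smul_comm, mul_one, one_mul, smul_add,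
    smul_sub, smul_smul, smul_neg, neg_add]
  match_scalars <;> ring

theorem rbrk_opD_opDdag (hQ : Differentiable ℝ Q) (hQ' : Differentiable ℝ (deriv Q)) (t : ℝ) :
    rbrk (OpD N a) (OpDdag N ν) Q t = OpM N Q t := by
  simp only [rbrk, Pi.sub_apply, opD_apply, opDdag_apply, deriv_opD a hQ hQ',
    deriv_opDdag ν hQ hQ', opM_apply]
  simp only [mul_add, add_mul, mul_sub, sub_mul, smul_mul_assoc, mul_smul_comm, mul_one,
    one_mul, smul_add, smul_sub, smul_smul, neg_mul, smul_neg, neg_add, mul_assoc, Amat_mul_Jmat]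
  match_scalars <;> ring

theorem rbrk_opD2_opM (hQ : Differentiable ℝ Q) (hQ' : Differentiable ℝ (deriv Q)) (t : ℝ) :
    rbrk (OpD2 N a ν) (OpM N) Q t = -OpD N a Q t + OpDdag N ν Q t := by
  simp only [rbrk, Pi.sub_apply, opD2_apply, deriv_deriv_opM hQ hQ', deriv_opM hQ, opM_apply,
    opD_apply, opDdag_apply]
  simp only [mul_add, add_mul, mul_sub, smul_mul_assoc, mul_smul_comm, mul_one, one_mul,
    smul_add, smul_sub, smul_smul, neg_add]
  match_scalars <;> ring

theorem rbrk_opD_opD2 (hQ : Differentiable ℝ Q) (hQ' : Differentiable ℝ (deriv Q))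
    (hQ'' : Differentiable ℝ (deriv (deriv Q))) (t : ℝ) :
    rbrk (OpD N a) (OpD2 N a ν) Q t =
      -OpD N a Q t + OpD2 N a ν Q t - ((1 : ℂ) + ν) • Q t := by
  simp only [rbrk, Pi.sub_apply, opD2_apply, opD_apply, deriv_deriv_opD a hQ hQ' hQ'',
    deriv_opD a hQ hQ', deriv_opD2 a ν hQ hQ' hQ'']
  simp only [mul_add, add_mul, mul_sub, sub_mul, smul_mul_assoc, mul_smul_comm, mul_one,
    one_mul, smul_add, smul_sub, smul_smul, neg_add, mul_assoc, Amat_mul_Jmat, Amat_mul_Jmat_mul]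
  match_scalars <;> ring

theorem rbrk_opDdag_opD2 (hQ : Differentiable ℝ Q) (hQ' : Differentiable ℝ (deriv Q))
    (hQ'' : Differentiable ℝ (deriv (deriv Q))) (t : ℝ) :
    rbrk (OpDdag N ν) (OpD2 N a ν) Q t =
      OpDdag N ν Q t - OpD2 N a ν Q t + ((1 : ℂ) + ν) • Q t := by
  simp only [rbrk, Pi.sub_apply, opD2_apply, opDdag_apply, deriv_deriv_opDdag ν hQ hQ' hQ'',
    deriv_opDdag ν hQ hQ', deriv_opD2 a ν hQ hQ' hQ'']
  simp only [mul_add, add_mul, mul_sub, sub_mul, smul_mul_assoc, mul_smul_comm, mul_one,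
    one_mul, smul_add, smul_sub, smul_smul, neg_mul, smul_neg, neg_add, mul_assoc, Amat_mul_Jmat]
  match_scalars <;> ring

end Brackets

theorem bracket_identities_phi_x_general
    (N : ℕ) (a : ℕ → ℝ) (ν : ℝ) :
    ∀ Q : ℝ → MatC N, ContDiff ℝ ∞ Q → ∀ x : ℝ, 0 < x →
      (rbrk (OpD N a) (OpM N) Q x = -(OpM N Q x)) ∧
      (rbrk (OpDdag N ν) (OpM N) Q x = OpM N Q x) ∧
      (rbrk (OpD N a) (OpDdag N ν) Q x = OpM N Q x) ∧
      (rbrk (OpD2 N a ν) (OpM N) Q x = -(OpD N a Q x) + OpDdag N ν Q x) ∧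
      (rbrk (OpD N a) (OpD2 N a ν) Q x =
        -(OpD N a Q x) + OpD2 N a ν Q x - ((1 : ℂ) + (ν : ℂ)) • Q x) ∧
      (rbrk (OpDdag N ν) (OpD2 N a ν) Q x =
        OpDdag N ν Q x - OpD2 N a ν Q x + ((1 : ℂ) + (ν : ℂ)) • Q x) := by
  intro Q hQ x _
  have hD : ∀ k : ℕ, Differentiable ℝ (deriv^[k] Q) := fun k =>
    (hQ.iterate_deriv k).differentiable (by simp)
  exact ⟨rbrk_opD_opM a (hD 0) x, rbrk_opDdag_opM ν (hD 0) x,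
    rbrk_opD_opDdag a ν (hD 0) (hD 1) x, rbrk_opD2_opM a ν (hD 0) (hD 1) x,
    rbrk_opD_opD2 a ν (hD 0) (hD 1) (hD 2) x, rbrk_opDdag_opD2 a ν (hD 0) (hD 1) (hD 2) x⟩

/-- Statement 14: with `φ(x) = x`, the bracket identities `[𝒟,m] = −m`, `[𝒟†,m] = m`,
`[𝒟,𝒟†] = m`, `[D,m] = −𝒟 + 𝒟†`, `[𝒟,D] = −𝒟 + D − (1+ν)·1`,
`[𝒟†,D] = 𝒟† − D + (1+ν)·1` hold. -/
theorem bracket_identities_phi_x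
    (N : ℕ) (hN : 2 ≤ N) (a : ℕ → ℝ) (ν : ℝ) (hν : 0 < ν) :
    ∀ Q : ℝ → MatC N, ContDiff ℝ ∞ Q → ∀ x : ℝ, 0 < x →
      (rbrk (OpD N a) (OpM N) Q x = -(OpM N Q x)) ∧
      (rbrk (OpDdag N ν) (OpM N) Q x = OpM N Q x) ∧
      (rbrk (OpD N a) (OpDdag N ν) Q x = OpM N Q x) ∧
      (rbrk (OpD2 N a ν) (OpM N) Q x = -(OpD N a Q x) + OpDdag N ν Q x) ∧
      (rbrk (OpD N a) (OpD2 N a ν) Q x =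
        -(OpD N a Q x) + OpD2 N a ν Q x - ((1 : ℂ) + (ν : ℂ)) • Q x) ∧
      (rbrk (OpDdag N ν) (OpD2 N a ν) Q x =
        OpDdag N ν Q x - OpD2 N a ν Q x + ((1 : ℂ) + (ν : ℂ)) • Q x) :=
  bracket_identities_phi_x_general N a ν
end
end

section
/- The zeroth moment H_0 = ∫₀^∞ e^{xA} T^{(ν)}(x) e^{xA^T} dx of the Laguerre-type weight satisfies, for all 1 ≤ i, j ≤ N, (H_0)_{i,j} = Σ_{r=1}^{min(i,j)} [δ^{(ν)}_r / ((i−r)! (j−r)!)] · (∏_{k=r}^{i−1} a_k) · (∏_{s=r}^{j−1} a_s) · Γ(ν + i + j − r + 1), where Γ is the Gamma function and empty products equal 1. -/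
/-! `A` is nilpotent, so `e^{xA}` is a polynomial in `x`: its `(i, r)` entry is
`x^{i-r}/(i-r)! ∏_{k=r}^{i-1} a_k` for `r ≤ i` and `0` otherwise. Since `T^{(ν)}(x)` is diagonal,
the `(i, j)` entry of the integrand is the finite sum over `r ≤ min(i, j)` of these coefficients
times `δ_r e^{-x} x^{ν+i+j-r}`, and each term integrates to a multiple of
`Γ(ν + i + j - r + 1)`. The same formula shows that every entry, hence the whole matrix
integrand, is integrable on `(0, ∞)`. -/

open MeasureTheory Matrix

attribute [local instance] Matrix.normedAddCommGroup Matrix.normedSpace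

noncomputable section

def shiftExpCoeff (a : ℕ → ℝ) (z : ℂ) (i j : ℕ) : ℂ :=
  if j ≤ i then
    z ^ (i - j) * ((i - j).factorial : ℂ)⁻¹ * ((∏ k ∈ Finset.Ico (j + 1) (i + 1), a k : ℝ) : ℂ)
  else 0

section ShiftMatrix

variable (N : ℕ) (a : ℕ → ℝ)

lemma Amat_apply (i j : Fin N) :
    Amat N a i j = if (i : ℕ) = (j : ℕ) + 1 then ((a ((j : ℕ) + 1) : ℝ) : ℂ) else 0 := rfl

lemma Amat_pow_apply (n : ℕ) (i j : Fin N) :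
    (Amat N a ^ n) i j =
      if (i : ℕ) = (j : ℕ) + n then ((∏ k ∈ Finset.Ico ((j : ℕ) + 1) ((i : ℕ) + 1), a k : ℝ) : ℂ)
      else 0 := by
  induction n generalizing j with
  | zero =>
    rw [pow_zero, Matrix.one_apply, add_zero]
    by_cases h : i = j
    · simp [h]
    · simp [h, Fin.val_injective.ne h]
  | succ n ih =>
    rw [pow_succ, Matrix.mul_apply]
    by_cases h : (i : ℕ) = (j : ℕ) + (n + 1)
    · have hj : (j : ℕ) + 1 < N := by omega
      rw [Finset.sum_eq_single ⟨(j : ℕ) + 1, hj⟩, ih, Amat_apply]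
      · simp only [h, if_pos (show (j : ℕ) + (n + 1) = (j : ℕ) + 1 + n by omega),
          if_true, ← Complex.ofReal_mul, Finset.prod_eq_prod_Ico_succ_bot (show (j : ℕ) + 1 <
            (j : ℕ) + (n + 1) + 1 by omega), mul_comm]
      · intro l _ hl
        rw [Amat_apply, if_neg (fun h' => hl (Fin.ext h')), mul_zero]
      · simp
    · refine (Finset.sum_eq_zero fun l _ => ?_).trans (if_neg h).symm
      rw [ih, Amat_apply]
      split_ifs <;> first | omega | simp

lemma Amat_pow_eq_zero : Amat N a ^ N = 0 := by
  ext i j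
  rw [Amat_pow_apply, if_neg (by omega)]
  rfl

lemma exp_smul_Amat_apply (z : ℂ) (i j : Fin N) :
    NormedSpace.exp (z • Amat N a) i j = shiftExpCoeff a z i j := by
  have hterm (n : ℕ) : ((n.factorial : ℂ)⁻¹ • (z • Amat N a) ^ n) i j
      = (n.factorial : ℂ)⁻¹ * z ^ n * (Amat N a ^ n) i j := by
    rw [smul_pow, Matrix.smul_apply, Matrix.smul_apply, smul_eq_mul, smul_eq_mul, mul_assoc]
  have hvanish : ∀ n ∉ Finset.range N, (n.factorial : ℂ)⁻¹ • (z • Amat N a) ^ n = 0 := by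
    intro n hn
    rw [Finset.mem_range, not_lt] at hn
    rw [smul_pow, pow_eq_zero_of_le hn (Amat_pow_eq_zero N a), smul_zero, smul_zero]
  rw [NormedSpace.exp_eq_tsum ℂ]
  beta_reduce
  rw [tsum_eq_sum hvanish, Matrix.sum_apply,
    Finset.sum_eq_single ((i : ℕ) - (j : ℕ)), hterm, Amat_pow_apply]
  · unfold shiftExpCoeff
    by_cases hji : (j : ℕ) ≤ (i : ℕ)
    · rw [if_pos (by omega), if_pos hji, mul_comm _ (z ^ _)]
    · rw [if_neg (by omega), if_neg hji, mul_zero]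
  · intro n _ hn
    rw [hterm, Amat_pow_apply, if_neg (by omega), mul_zero]
  · intro h
    exact absurd (Finset.mem_range.mpr (by omega)) h

end ShiftMatrix

lemma Matrix.exp_smul_transpose_apply {m 𝔸 : Type*} [Fintype m] [DecidableEq m] [CommRing 𝔸]
    [TopologicalSpace 𝔸] [IsTopologicalRing 𝔸] [Algebra ℚ 𝔸] [T2Space 𝔸] (z : 𝔸)
    (M : Matrix m m 𝔸) (i j : m) :
    NormedSpace.exp (z • Mᵀ) i j = NormedSpace.exp (z • M) j i := by
  rw [← Matrix.transpose_smul, Matrix.exp_transpose, Matrix.transpose_apply]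

lemma exp_mul_Tmat_mul_exp_transpose_apply (N : ℕ) (a : ℕ → ℝ) (ν : ℝ) (δ : ℕ → ℝ) {x : ℝ}
    (hx : 0 < x) (i j : Fin N) :
    (NormedSpace.exp ((x : ℂ) • Amat N a) * Tmat N ν δ x *
        NormedSpace.exp ((x : ℂ) • (Amat N a)ᵀ)) i j =
      ∑ r ∈ Finset.range (min ((i : ℕ) + 1) ((j : ℕ) + 1)),
        ((δ (r + 1) / ((Nat.factorial ((i : ℕ) - r)) * (Nat.factorial ((j : ℕ) - r))) *
          (∏ k ∈ Finset.Ico (r + 1) ((i : ℕ) + 1), a k) *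
          (∏ s ∈ Finset.Ico (r + 1) ((j : ℕ) + 1), a s) *
          (Real.exp (-x) *
            x ^ (ν + ((i : ℕ) + 1) + ((j : ℕ) + 1) - (r + 1) + 1 - 1)) : ℝ) : ℂ) := by
  set f := shiftExpCoeff a x i
  set g := shiftExpCoeff a x j
  have hsum : (NormedSpace.exp ((x : ℂ) • Amat N a) * Tmat N ν δ x *
        NormedSpace.exp ((x : ℂ) • (Amat N a)ᵀ)) i j =
      ∑ r ∈ Finset.range N, f r *
        ((Real.exp (-x) * δ (r + 1) * x ^ (ν + (r : ℝ) + 1) : ℝ) : ℂ) * g r := by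
    simp only [Matrix.mul_apply (N := NormedSpace.exp ((x : ℂ) • (Amat N a)ᵀ)), Tmat,
      Matrix.mul_diagonal, Matrix.exp_smul_transpose_apply, exp_smul_Amat_apply]
    exact Fin.sum_univ_eq_sum_range (fun r => f r *
        ((Real.exp (-x) * δ (r + 1) * x ^ (ν + (r : ℝ) + 1) : ℝ) : ℂ) * g r) N
  have hvanish : ∀ r ∈ Finset.range N, r ∉ Finset.range (min ((i : ℕ) + 1) ((j : ℕ) + 1)) →
      f r * ((Real.exp (-x) * δ (r + 1) * x ^ (ν + (r : ℝ) + 1) : ℝ) : ℂ) * g r = 0 := by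
    intro r _ hr
    rw [Finset.mem_range, not_lt, min_le_iff] at hr
    rcases hr with hi | hj
    · rw [show f r = 0 from if_neg (by omega), zero_mul, zero_mul]
    · rw [show g r = 0 from if_neg (by omega), mul_zero]
  rw [hsum, ← Finset.sum_subset (Finset.range_subset_range.mpr (by omega)) hvanish]
  refine Finset.sum_congr rfl fun r hr => ?_
  obtain ⟨hri, hrj⟩ : r ≤ (i : ℕ) ∧ r ≤ (j : ℕ) := by
    rw [Finset.mem_range, lt_min_iff] at hr
    omega
  have hpow : x ^ ((i : ℕ) - r) * x ^ ((j : ℕ) - r) * x ^ (ν + (r : ℝ) + 1) =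
      x ^ (ν + ((i : ℕ) + 1) + ((j : ℕ) + 1) - (r + 1) + 1 - 1) := by
    rw [← Real.rpow_natCast, ← Real.rpow_natCast, ← Real.rpow_add hx, ← Real.rpow_add hx,
      Nat.cast_sub hri, Nat.cast_sub hrj]
    ring_nf
  simp only [f, g, shiftExpCoeff, if_pos hri, if_pos hrj, ← hpow]
  push_cast
  field_simp

lemma Matrix.integral_apply {X m n E : Type*} [MeasurableSpace X] {μ : Measure X} [Fintype m]
    [Fintype n] [NormedAddCommGroup E] [NormedSpace ℝ E] [CompleteSpace E] {F : X → Matrix m n E}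
    (hF : ∀ i j, Integrable (fun x => F x i j) μ) (i : m) (j : n) :
    (∫ x, F x ∂μ) i j = ∫ x, F x i j ∂μ :=
  (congrFun (eval_integral (fun i => integrable_pi_iff.mpr (hF i)) i) j).trans
    (eval_integral (hF i) j)

lemma integrableOn_ofReal_mul_gammaIntegrand (c : ℝ) {s : ℝ} (hs : 0 < s) :
    IntegrableOn (fun x : ℝ => ((c * (Real.exp (-x) * x ^ (s - 1)) : ℝ) : ℂ)) (Set.Ioi 0) :=
  ((Real.GammaIntegral_convergent hs).const_mul c).ofReal

lemma integral_ofReal_mul_gammaIntegrand (c : ℝ) {s : ℝ} (hs : 0 < s) :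
    ∫ x in Set.Ioi (0 : ℝ), ((c * (Real.exp (-x) * x ^ (s - 1)) : ℝ) : ℂ) =
      ((c * Real.Gamma s : ℝ) : ℂ) := by
  rw [integral_complex_ofReal, integral_const_mul, Real.Gamma_eq_integral hs]

-- Rows, columns and the summation index are 0-based: `(i, j, r)` stands for the labels
-- `(i + 1, j + 1, r + 1)` of the informal statement.
theorem H0_entries_formula_general
    (N : ℕ) (a : ℕ → ℝ) (ν : ℝ) (hν : 0 < ν)
    (δ : ℕ → ℝ) :
    ∀ i j : Fin N,
      (∫ x in Set.Ioi (0 : ℝ), NormedSpace.exp ((x : ℂ) • Amat N a) * Tmat N ν δ x *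
        NormedSpace.exp ((x : ℂ) • (Amat N a)ᵀ)) i j =
      ∑ r ∈ Finset.range (min ((i : ℕ) + 1) ((j : ℕ) + 1)),
        ((δ (r + 1) / ((Nat.factorial ((i : ℕ) - r)) * (Nat.factorial ((j : ℕ) - r))) *
          (∏ k ∈ Finset.Ico (r + 1) ((i : ℕ) + 1), a k) *
          (∏ s ∈ Finset.Ico (r + 1) ((j : ℕ) + 1), a s) *
          Real.Gamma (ν + ((i : ℕ) + 1) + ((j : ℕ) + 1) - (r + 1) + 1) : ℝ) : ℂ) := by
  have hexponent_pos : ∀ (i j : Fin N), ∀ r ∈ Finset.range (min ((i : ℕ) + 1) ((j : ℕ) + 1)),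
      0 < ν + ((i : ℕ) + 1) + ((j : ℕ) + 1) - ((r : ℝ) + 1) + 1 := by
    intro i j r hr
    have hri : (r : ℝ) ≤ (i : ℕ) := by
      rw [Finset.mem_range, lt_min_iff] at hr
      exact_mod_cast Nat.lt_succ_iff.mp hr.1
    have hj : (0 : ℝ) ≤ (j : ℕ) := Nat.cast_nonneg _
    linarith
  have hentry_int : ∀ i j : Fin N, IntegrableOn (fun x : ℝ =>
      (NormedSpace.exp ((x : ℂ) • Amat N a) * Tmat N ν δ x *
        NormedSpace.exp ((x : ℂ) • (Amat N a)ᵀ)) i j) (Set.Ioi 0) := fun i j =>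
    IntegrableOn.congr_fun (integrable_finsetSum _ fun r hr =>
      integrableOn_ofReal_mul_gammaIntegrand _ (hexponent_pos i j r hr))
      (fun x hx => (exp_mul_Tmat_mul_exp_transpose_apply N a ν δ hx i j).symm) measurableSet_Ioi
  intro i j
  rw [Matrix.integral_apply hentry_int,
    setIntegral_congr_fun measurableSet_Ioi
      (fun x hx => exp_mul_Tmat_mul_exp_transpose_apply N a ν δ hx i j),
    integral_finsetSum _ fun r hr =>
      integrableOn_ofReal_mul_gammaIntegrand _ (hexponent_pos i j r hr)]
  exact Finset.sum_congr rfl fun r hr =>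
    integral_ofReal_mul_gammaIntegrand _ (hexponent_pos i j r hr)

/-- Statement 19: the zeroth moment `H₀ = ∫₀^∞ e^{xA} T^{(ν)}(x) e^{xAᵀ} dx` satisfies
`(H₀)_{i,j} = Σ_{r=1}^{min(i,j)} δ_r/((i−r)!(j−r)!) (∏_{k=r}^{i−1} a_k)(∏_{s=r}^{j−1} a_s)
Γ(ν+i+j−r+1)` (rows and columns labelled `1,…,N`; the index pair `(i,j) : Fin N × Fin N`
corresponds to the labels `(i+1, j+1)`, and the summation index `r` below corresponds to the
label `r+1`). -/
theorem H0_entries_formula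
    (N : ℕ) (hN : 2 ≤ N) (a : ℕ → ℝ) (ν : ℝ) (hν : 0 < ν)
    (δ : ℕ → ℝ) (hδ : ∀ k, 1 ≤ k → k ≤ N → 0 < δ k)
    (hint : @IntegrableOn _ _ _ _ SeminormedAddGroup.toContinuousENorm
      (fun x : ℝ => NormedSpace.exp ((x : ℂ) • Amat N a) * Tmat N ν δ x *
        NormedSpace.exp ((x : ℂ) • (Amat N a)ᵀ)) (Set.Ioi 0) volume) :
    ∀ i j : Fin N,
      (∫ x in Set.Ioi (0 : ℝ), NormedSpace.exp ((x : ℂ) • Amat N a) * Tmat N ν δ x *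
        NormedSpace.exp ((x : ℂ) • (Amat N a)ᵀ)) i j =
      ∑ r ∈ Finset.range (min ((i : ℕ) + 1) ((j : ℕ) + 1)),
        ((δ (r + 1) / ((Nat.factorial ((i : ℕ) - r)) * (Nat.factorial ((j : ℕ) - r))) *
          (∏ k ∈ Finset.Ico (r + 1) ((i : ℕ) + 1), a k) *
          (∏ s ∈ Finset.Ico (r + 1) ((j : ℕ) + 1), a s) *
          Real.Gamma (ν + ((i : ℕ) + 1) + ((j : ℕ) + 1) - (r + 1) + 1) : ℝ) : ℂ) :=
  H0_entries_formula_general N a ν hν δ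
end
end
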